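/- With the notation of the entanglement FR protocol (state |ψ⟩ = (1/√3)(|0000⟩+|1100⟩+|1111⟩), post-selection |φ⟩ = |ok⟩⊗|ok⟩, |ok⟩=(|00⟩−|11⟩)/√2), the conditional probability of Alice's outcome a=0 given successful post-selection depends on Bob's setting: P(a=0 | φ, (x₁,x₂)=(1,0)) = 1 while P(a=0 | φ, (x₁,x₂)=(1,1)) = 1/3, where probabilities are computed via the pre/post-selection rule P(outcome) = |⟨φ| π |ψ⟩|² / Σ |⟨φ| π' |ψ⟩|² with the appropriate projector families {|aa⟩⟨aa|_{RA}⊗1} for setting (1,0) and {|aa⟩⟨aa|_{RA}⊗|bb⟩⟨bb|_{SB}} (marginalised over b) for setting (1,1). In particular, the setting-independence assumption fails: these two predictions are unequal. -/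

import Mathlib

open BigOperators

/-- Two-qubit basis labels. -/
abbrev Q2 := Fin 2 × Fin 2
/-- Four-qubit basis labels, grouped as (R,A) × (S,B). -/
abbrev Q4 := Q2 × Q2

/-- `1/√3`. -/
noncomputable def c3 : ℂ := ((Real.sqrt 3 : ℝ) : ℂ)⁻¹
/-- `1/√2`. -/
noncomputable def c2 : ℂ := ((Real.sqrt 2 : ℝ) : ℂ)⁻¹

/-- The FR state `|ψ⟩ = (1/√3)(|0000⟩ + |1100⟩ + |1111⟩)` on qubits R,A,S,B. -/
noncomputable def ψFR : Q4 → ℂ := fun p =>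
  if p = (((0, 0) : Q2), ((0, 0) : Q2)) then c3
  else if p = (((1, 1) : Q2), ((0, 0) : Q2)) then c3
  else if p = (((1, 1) : Q2), ((1, 1) : Q2)) then c3
  else 0

/-- `|ok⟩ = (1/√2)(|00⟩ − |11⟩)`. -/
noncomputable def okv : Q2 → ℂ := fun p =>
  if p = ((0, 0) : Q2) then c2 else if p = ((1, 1) : Q2) then -c2 else 0

/-- Two-qubit computational basis vector. -/
def ketv (q : Q2) : Q2 → ℂ := fun p => if p = q then 1 else 0

/-- Tensor product of two two-qubit vectors. -/
noncomputable def tens (u v : Q2 → ℂ) : Q4 → ℂ := fun p => u p.1 * v p.2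

/-- Inner product `⟨w|v⟩ = ∑ p, conj (w p) * v p`. -/
noncomputable def ip (w v : Q4 → ℂ) : ℂ := ∑ p : Q4, star (w p) * v p

/-- Projector onto Alice's outcome `a`: `π_a^A = |aa⟩⟨aa| ⊗ 1_{SB}`, applied to a vector. -/
noncomputable def projA (a : Fin 2) (v : Q4 → ℂ) : Q4 → ℂ := fun p =>
  if p.1 = ((a, a) : Q2) then v p else 0

/-- Joint projector `π_{a,b} = |aa⟩⟨aa|_{RA} ⊗ |bb⟩⟨bb|_{SB}`, applied to a vector. -/
noncomputable def projAB (a b : Fin 2) (v : Q4 → ℂ) : Q4 → ℂ := fun p =>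
  if p.1 = ((a, a) : Q2) ∧ p.2 = ((b, b) : Q2) then v p else 0

/-- `P(a=0 | φ, (x₁,x₂)=(1,0))`: Bob modelled unitarily. -/
noncomputable def Pa0_setting10 : ℝ :=
  ‖ip (tens okv okv) (projA 0 ψFR)‖ ^ 2 /
    ∑ a' : Fin 2, ‖ip (tens okv okv) (projA a' ψFR)‖ ^ 2

/-- `P(a=0 | φ, (x₁,x₂)=(1,1))`: Bob's outcome identified and marginalised. -/
noncomputable def Pa0_setting11 : ℝ :=
  (∑ b : Fin 2, ‖ip (tens okv okv) (projAB 0 b ψFR)‖ ^ 2) /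
    ∑ a' : Fin 2, ∑ b' : Fin 2, ‖ip (tens okv okv) (projAB a' b' ψFR)‖ ^ 2

/-!
Only the branches `(a,b) = (0,0), (1,0), (1,1)` of `ψFR` survive the post-selection, each with
amplitude `±1/(2√3)`; the `(1,0)` branch carries the sign of the `|11⟩` component of `|ok⟩`.
When Bob's outcome is not identified, the amplitudes of the branches with `a = 1` add coherently
and cancel, so `a = 0` is certain. When it is identified, their squared norms add instead, and
the three surviving branches are equally likely.
-/

lemma ip_projAB (w v : Q4 → ℂ) (a b : Fin 2) :
    ip w (projAB a b v) = star (w ((a, a), (b, b))) * v ((a, a), (b, b)) := by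
  unfold ip projAB
  rw [Finset.sum_eq_single ((a, a), (b, b))]
  · simp
  · intro p _ hp
    rw [if_neg fun h => hp (Prod.ext h.1 h.2), mul_zero]
  · simp

lemma ip_projA_eq_sum_ip_projAB (w v : Q4 → ℂ) (a : Fin 2)
    (hv : ∀ r : Q2, ∀ q : Q2, q.1 ≠ q.2 → v (r, q) = 0) :
    ip w (projA a v) = ∑ b : Fin 2, ip w (projAB a b v) := by
  simp only [ip_projAB]
  unfold ip projA
  rw [Fintype.sum_prod_type, Finset.sum_eq_single (a, a)]
  · simp only [if_true, Fintype.sum_prod_type, Fin.sum_univ_two]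
    rw [hv _ (0, 1) (by decide), hv _ (1, 0) (by decide)]
    ring
  · intro r _ hr
    simp [hr]
  · simp

lemma ψFR_off_diagonal (r q : Q2) (hq : q.1 ≠ q.2) : ψFR (r, q) = 0 := by
  obtain ⟨b, b'⟩ := q
  simp only [ψFR, Prod.ext_iff]
  split_ifs <;> simp_all

lemma star_c2 : star c2 = c2 := by simp [c2]

lemma norm_sq_c2 : ‖c2‖ ^ 2 = 1 / 2 := by
  simp [c2, Real.sq_sqrt]

lemma norm_sq_c3 : ‖c3‖ ^ 2 = 1 / 3 := by
  simp [c3, Real.sq_sqrt]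

lemma norm_sq_branch : ‖c2 * c2 * c3‖ ^ 2 = 1 / 12 := by
  rw [norm_mul, norm_mul, mul_pow, mul_pow, norm_sq_c2, norm_sq_c3]
  norm_num

lemma branch_00 : ip (tens okv okv) (projAB 0 0 ψFR) = c2 * c2 * c3 := by
  simp [ip_projAB, tens, okv, ψFR, star_c2]

lemma branch_01 : ip (tens okv okv) (projAB 0 1 ψFR) = 0 := by
  simp [ip_projAB, tens, okv, ψFR]

lemma branch_10 : ip (tens okv okv) (projAB 1 0 ψFR) = -(c2 * c2 * c3) := by
  simp [ip_projAB, tens, okv, ψFR, star_c2]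

lemma branch_11 : ip (tens okv okv) (projAB 1 1 ψFR) = c2 * c2 * c3 := by
  simp [ip_projAB, tens, okv, ψFR, star_c2]

/-- the conditional probability of Alice's outcome `a = 0` given
successful post-selection depends on Bob's setting: it is `1` under settings
`(1,0)` and `1/3` under settings `(1,1)`; in particular setting-independence fails. -/
theorem fr_setting_dependence :
    Pa0_setting10 = 1 ∧ Pa0_setting11 = 1 / 3 ∧ Pa0_setting10 ≠ Pa0_setting11 := by
  have h10 : Pa0_setting10 = 1 := by
    simp only [Pa0_setting10, ip_projA_eq_sum_ip_projAB _ _ _ ψFR_off_diagonal, Fin.sum_univ_two,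
      branch_00, branch_01, branch_10, branch_11, add_zero, neg_add_cancel, norm_zero,
      norm_sq_branch]
    norm_num
  have h11 : Pa0_setting11 = 1 / 3 := by
    simp only [Pa0_setting11, Fin.sum_univ_two, branch_00, branch_01, branch_10, branch_11,
      norm_neg, norm_zero, norm_sq_branch]
    norm_num
  refine ⟨h10, h11, ?_⟩
  rw [h10, h11]
  norm_num
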